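/- arXiv:1302.3147 — 2 statements merged into one kernel-verified Lean document; each statement's English description precedes it below -/
import Mathlib

section
/- Let δ = 2^{−log 2} (the minimum over x > 0 of (1 − e^{−x})^x). For all integers m ≥ 1, n ≥ 1 and all reals K > 0, K̃ > 0, a ≥ 0, b ≥ 0, q₀ ∈ [0, 1), q̃₀ ∈ [0, 1), one has (1 − e^{−K(m + b·n)}·(1 − q₀))^m · (1 − e^{−K̃(a·m + n)}·(1 − q̃₀))^n ≥ δ^{1/K + 1/K̃}. -/
/-!
With `t = e^{-y}`, the bound `δ ≤ (1 - e^{-y})^y` is `log t * log (1 - t) ≤ (log 2)^2`. The product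
is symmetric under `t ↦ 1 - t`, and on `(0, 1/2]` it is increasing: its derivative
`log (1 - t) / t - log t / (1 - t)` is nonnegative because the secant slope `-log s / (1 - s)` of
the concave function `log` towards `1` decreases in `s`, and `t ≤ 1 - t`. Each factor of the
theorem is at least `(1 - e^{-K m})^m = ((1 - e^{-K m})^{K m})^{1/K} ≥ δ^{1/K}`.
-/

/-- δ = 2^{-log 2}, the minimum over x > 0 of (1 - e^{-x})^x. -/
noncomputable def rickerDelta : ℝ := (2 : ℝ) ^ (-Real.log 2)

open Real Set

lemma log_div_one_sub_le_log_one_sub_div {t : ℝ} (h0 : 0 < t) (ht : t ≤ 1 / 2) :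
    log t / (1 - t) ≤ log (1 - t) / t := by
  have hslope := strictConcaveOn_log_Ioi.concaveOn.neg.secant_mono (a := 1) (x := t) (y := 1 - t)
    (by simp) (by simpa using h0) (by simp; linarith) (by linarith) (by linarith) (by linarith)
  simp only [Pi.neg_apply, log_one, neg_zero, sub_zero, sub_sub_cancel_left] at hslope
  rwa [neg_div_neg_eq, ← neg_sub, div_neg, neg_div, neg_neg] at hslope

lemma hasDerivAt_log_mul_log_one_sub {t : ℝ} (h0 : 0 < t) (h1 : t < 1) :
    HasDerivAt (fun s ↦ log s * log (1 - s)) (log (1 - t) / t - log t / (1 - t)) t := by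
  have hlog := hasDerivAt_log h0.ne'
  have hlog' := ((hasDerivAt_id t).const_sub 1).log (by simp; linarith)
  refine (hlog.mul hlog').congr_deriv ?_
  simp only [id]
  ring

lemma log_mul_log_one_sub_le_of_le_half {t : ℝ} (h0 : 0 < t) (ht : t ≤ 1 / 2) :
    log t * log (1 - t) ≤ log 2 ^ 2 := by
  have hderiv : ∀ s ∈ Ioc (0 : ℝ) (1 / 2),
      HasDerivAt (fun s ↦ log s * log (1 - s)) (log (1 - s) / s - log s / (1 - s)) s :=
    fun s hs ↦ hasDerivAt_log_mul_log_one_sub hs.1 (by linarith [hs.2])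
  have hmono : MonotoneOn (fun s ↦ log s * log (1 - s)) (Ioc 0 (1 / 2)) := by
    refine monotoneOn_of_deriv_nonneg (convex_Ioc 0 (1 / 2))
      (fun s hs ↦ (hderiv s hs).continuousAt.continuousWithinAt) ?_ ?_ <;> rw [interior_Ioc]
    · exact fun s hs ↦ (hderiv s (Ioo_subset_Ioc_self hs)).differentiableAt.differentiableWithinAt
    · intro s hs
      rw [(hderiv s (Ioo_subset_Ioc_self hs)).deriv, sub_nonneg]
      exact log_div_one_sub_le_log_one_sub_div hs.1 hs.2.le
  have := hmono ⟨h0, ht⟩ ⟨by norm_num, le_rfl⟩ ht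
  norm_num at this
  simpa [one_div, log_inv, sq] using this

lemma log_mul_log_one_sub_le {t : ℝ} (h0 : 0 < t) (h1 : t < 1) :
    log t * log (1 - t) ≤ log 2 ^ 2 := by
  rcases le_total t (1 / 2) with ht | ht
  · exact log_mul_log_one_sub_le_of_le_half h0 ht
  · simpa [mul_comm] using log_mul_log_one_sub_le_of_le_half (t := 1 - t) (by linarith) (by linarith)

lemma rickerDelta_eq_exp : rickerDelta = exp (-log 2 ^ 2) := by
  rw [rickerDelta, rpow_def_of_pos two_pos]
  ring_nf

lemma rickerDelta_pos : 0 < rickerDelta := by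
  rw [rickerDelta_eq_exp]
  exact exp_pos _

lemma rickerDelta_le_one : rickerDelta ≤ 1 :=
  rpow_le_one_of_one_le_of_nonpos one_le_two (neg_nonpos.2 (log_nonneg one_le_two))

lemma rickerDelta_le_one_sub_exp_neg_rpow_self {y : ℝ} (hy : 0 ≤ y) :
    rickerDelta ≤ (1 - exp (-y)) ^ y := by
  rcases hy.eq_or_lt with rfl | hy
  · simpa using rickerDelta_le_one
  have ht0 : 0 < exp (-y) := exp_pos _
  have ht1 : exp (-y) < 1 := exp_lt_one_iff.2 (neg_lt_zero.2 hy)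
  have key := log_mul_log_one_sub_le ht0 ht1
  rw [log_exp] at key
  rw [rickerDelta_eq_exp, rpow_def_of_pos (sub_pos.2 ht1), exp_le_exp]
  linarith

lemma rickerDelta_rpow_inv_le_pow {K c q : ℝ} {m : ℕ} (hK : 0 < K) (hc : (m : ℝ) ≤ c)
    (hq : 0 ≤ q) : rickerDelta ^ (1 / K) ≤ (1 - exp (-(K * c)) * (1 - q)) ^ m := by
  have hKm : 0 ≤ K * m := by positivity
  have hB : 0 ≤ 1 - exp (-(K * m)) := sub_nonneg.2 (exp_le_one_iff.2 (neg_nonpos.2 hKm))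
  calc rickerDelta ^ (1 / K) ≤ ((1 - exp (-(K * m))) ^ (K * m)) ^ (1 / K) :=
        rpow_le_rpow rickerDelta_pos.le (rickerDelta_le_one_sub_exp_neg_rpow_self hKm)
          (by positivity)
    _ = (1 - exp (-(K * m))) ^ m := by
        rw [← rpow_mul hB, mul_right_comm, mul_one_div_cancel hK.ne', one_mul, rpow_natCast]
    _ ≤ (1 - exp (-(K * c)) * (1 - q)) ^ m := by
        refine pow_le_pow_left₀ hB ?_ m
        have : exp (-(K * c)) ≤ exp (-(K * m)) := exp_le_exp.2 (by nlinarith)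
        nlinarith [exp_pos (-(K * c))]

theorem extinction_prob_bivariate_ge_general (m n : ℕ)
    (K K' a b q0 q0' : ℝ)
    (hK : 0 < K) (hK' : 0 < K') (ha : 0 ≤ a) (hb : 0 ≤ b)
    (hq0 : 0 ≤ q0) (hq0' : 0 ≤ q0') :
    rickerDelta ^ (1 / K + 1 / K') ≤
      (1 - Real.exp (-(K * ((m : ℝ) + b * (n : ℝ)))) * (1 - q0)) ^ m *
      (1 - Real.exp (-(K' * (a * (m : ℝ) + (n : ℝ)))) * (1 - q0')) ^ n := by
  have hfirst : rickerDelta ^ (1 / K) ≤ (1 - exp (-(K * (m + b * n))) * (1 - q0)) ^ m :=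
    rickerDelta_rpow_inv_le_pow hK (le_add_of_nonneg_right (by positivity)) hq0
  have hsecond : rickerDelta ^ (1 / K') ≤ (1 - exp (-(K' * (a * m + n))) * (1 - q0')) ^ n :=
    rickerDelta_rpow_inv_le_pow hK' (le_add_of_nonneg_left (by positivity)) hq0'
  have hnonneg (x : ℝ) : 0 ≤ rickerDelta ^ x := rpow_nonneg rickerDelta_pos.le x
  rw [rpow_add rickerDelta_pos]
  exact mul_le_mul hfirst hsecond (hnonneg _) ((hnonneg _).trans hfirst)

/-- The probability that the bivariate stochastic Ricker competition process goes
extinct in one step from the state (m,n) is at least δ^{1/K + 1/K̃}. -/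
theorem extinction_prob_bivariate_ge (m n : ℕ) (hm : 1 ≤ m) (hn : 1 ≤ n)
    (K K' a b q0 q0' : ℝ)
    (hK : 0 < K) (hK' : 0 < K') (ha : 0 ≤ a) (hb : 0 ≤ b)
    (hq0 : 0 ≤ q0) (hq01 : q0 < 1) (hq0' : 0 ≤ q0') (hq01' : q0' < 1) :
    rickerDelta ^ (1 / K + 1 / K') ≤
      (1 - Real.exp (-(K * ((m : ℝ) + b * (n : ℝ)))) * (1 - q0)) ^ m *
      (1 - Real.exp (-(K' * (a * (m : ℝ) + (n : ℝ)))) * (1 - q0')) ^ n :=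
  extinction_prob_bivariate_ge_general m n K K' a b q0 q0' hK hK' ha hb hq0 hq0'
end

section
/- Fix parameters r, r̃ ∈ ℝ, a, b > 0, K, K̃ > 0 and probability mass functions q, q̃ on the nonnegative integers with means e^r, e^{r̃}, finite variances, and q(k) > 0, q̃(k) > 0 for all k ≥ 1. Then the stochastic Ricker competition chain admits a quasi-stationary distribution: there exist λ ∈ (0,1) and a probability measure π on the all-positive states {(m,n) ∈ ℤ² : m ≥ 1, n ≥ 1} such that Σ_{(i,j)} π(i,j)·Q((i,j),(m,n)) = λ·π(m,n) for all m, n ≥ 1. -/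
open Filter

/-- The modified offspring distribution: given inhibition exponent c, the litter size has
P(ξ = k) = e^{−c}·q(k) for k ≥ 1 and P(ξ = 0) = 1 − e^{−c}·(1 − q(0)). -/
noncomputable def modPMF (c : ℝ) (q : ℕ → ℝ) : ℕ → ℝ :=
  fun k => if k = 0 then 1 - Real.exp (-c) * (1 - q 0) else Real.exp (-c) * q k

/-- `convPow f m` is the m-fold convolution power of the pmf `f` on ℕ: the distribution of
the sum of m i.i.d. random variables with pmf `f` (the point mass at 0 when m = 0). -/
noncomputable def convPow (f : ℕ → ℝ) : ℕ → ℕ → ℝ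
  | 0, k => if k = 0 then 1 else 0
  | m + 1, k => ∑ i ∈ Finset.range (k + 1), f i * convPow f m (k - i)

/-- The transition probabilities of the stochastic Ricker competition chain (U_t, V_t) on
ℤ_{≥0}²: from (m,n), U_{t+1} is a sum of m i.i.d. litters with pmf `modPMF (K(m+bn)) q` and,
independently, V_{t+1} is a sum of n i.i.d. litters with pmf `modPMF (K̃(am+n)) q̃`
(a coordinate equal to 0 stays 0). -/
noncomputable def rickerKernel (a b K K' : ℝ) (q q' : ℕ → ℝ) :
    ℕ × ℕ → ℕ × ℕ → ℝ :=
  fun p p' =>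
    convPow (modPMF (K * ((p.1 : ℝ) + b * (p.2 : ℝ))) q) p.1 p'.1 *
    convPow (modPMF (K' * (a * (p.1 : ℝ) + (p.2 : ℝ))) q') p.2 p'.2

/-- t-step transition probabilities of a Markov kernel on ℤ_{≥0}². -/
noncomputable def kernelPow (P : ℕ × ℕ → ℕ × ℕ → ℝ) : ℕ → ℕ × ℕ → ℕ × ℕ → ℝ
  | 0, p, p' => if p = p' then 1 else 0
  | t + 1, p, p' => ∑' s : ℕ × ℕ, P p s * kernelPow P t s p'

/-- `IsQSD P π lam` : π is a quasi-stationary distribution of the chain with transition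
probabilities `P`, with eigenvalue `lam`: π is a probability distribution supported on
the all-positive states {(m,n) : m ≥ 1, n ≥ 1}, and π·Q = lam·π where Q is the
restriction of P to the all-positive states. -/
def IsQSD (P : ℕ × ℕ → ℕ × ℕ → ℝ) (π : ℕ × ℕ → ℝ) (lam : ℝ) : Prop :=
  (∀ p, 0 ≤ π p) ∧
  (∀ p : ℕ × ℕ, p.1 = 0 ∨ p.2 = 0 → π p = 0) ∧
  HasSum π 1 ∧
  (∀ p : ℕ × ℕ, 1 ≤ p.1 → 1 ≤ p.2 →
    HasSum (fun s : ℕ × ℕ => π s * P s p) (lam * π p))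

/-!
On the box `[1, N]²` the restricted kernel is a positive matrix, so Perron's theorem gives a
quasi-stationary distribution `π_N` with eigenvalue `λ_N ≥ Q((1,1),(1,1)) > 0`. Because of the
Ricker inhibition, the expected population after one step is at most `e^r/K + e^{r̃}/K̃` from any
state, hence `λ_N · E_{π_N}[m + n]` is bounded and the `π_N` are uniformly tight. Tightness keeps
half of the mass on a fixed finite set, where one-step extinction has probability bounded below,
so the `λ_N` stay below some `λ₁ < 1`. Along a pointwise convergent subsequence tightness passes
both `∑ π = 1` and `π Q = λ π` to the limit.
-/

open Finset Topology

section Convolution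

theorem HasSum.sum_range_mul {f g : ℕ → ℝ} {a b : ℝ} (hf : HasSum f a) (hg : HasSum g b) :
    HasSum (fun n => ∑ k ∈ range (n + 1), f k * g (n - k)) (a * b) := by
  have h := hasSum_sum_range_mul_of_summable_norm (R := ℝ) hf.summable.norm hg.summable.norm
  rwa [hf.tsum_eq, hg.tsum_eq] at h

theorem HasSum.natCast_mul_sum_range_mul {f g : ℕ → ℝ} {a b a' b' : ℝ} (hf : HasSum f a)
    (hg : HasSum g b) (hf' : HasSum (fun k : ℕ => (k : ℝ) * f k) a')
    (hg' : HasSum (fun k : ℕ => (k : ℝ) * g k) b') :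
    HasSum (fun n : ℕ => (n : ℝ) * ∑ k ∈ range (n + 1), f k * g (n - k)) (a' * b + a * b') := by
  convert (hf'.sum_range_mul hg).add (hf.sum_range_mul hg') using 2 with n
  rw [← sum_add_distrib, mul_sum]
  refine sum_congr rfl fun k hk => ?_
  rw [Nat.cast_sub (Nat.lt_succ_iff.mp (mem_range.mp hk))]
  ring

end Convolution

section ConvPow

variable {f : ℕ → ℝ}

theorem convPow_nonneg (hf : ∀ k, 0 ≤ f k) (m k : ℕ) : 0 ≤ convPow f m k := by
  induction m generalizing k with
  | zero => unfold convPow; split_ifs <;> norm_num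
  | succ m ih => exact sum_nonneg fun i _ => mul_nonneg (hf i) (ih _)

theorem hasSum_convPow (hf : HasSum f 1) (m : ℕ) : HasSum (convPow f m) 1 := by
  induction m with
  | zero => exact hasSum_ite_eq 0 1
  | succ m ih => simpa only [convPow, one_mul] using hf.sum_range_mul ih

theorem hasSum_natCast_mul_convPow {μ : ℝ} (hf : HasSum f 1)
    (hμ : HasSum (fun k : ℕ => (k : ℝ) * f k) μ) (m : ℕ) :
    HasSum (fun k : ℕ => (k : ℝ) * convPow f m k) (m * μ) := by
  induction m with
  | zero =>
    convert hasSum_zero (α := ℝ) using 1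
    · funext k; unfold convPow; split_ifs with hk <;> simp [hk]
    · simp
  | succ m ih =>
    have h := hf.natCast_mul_sum_range_mul (hasSum_convPow hf m) hμ ih
    rwa [show μ * 1 + 1 * (m * μ) = ((m + 1 : ℕ) : ℝ) * μ by push_cast; ring] at h

theorem convPow_le_one (hf0 : ∀ k, 0 ≤ f k) (hf : HasSum f 1) (m k : ℕ) : convPow f m k ≤ 1 :=
  le_hasSum (hasSum_convPow hf m) k fun j _ => convPow_nonneg hf0 m j

theorem convPow_apply_zero (m : ℕ) : convPow f m 0 = f 0 ^ m := by
  induction m with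
  | zero => simp [convPow]
  | succ m ih => simp [convPow, ih, pow_succ, mul_comm]

theorem convPow_pos (hf : ∀ k, 0 < f k) {m : ℕ} (hm : m ≠ 0) (k : ℕ) : 0 < convPow f m k := by
  obtain ⟨m, rfl⟩ := Nat.exists_eq_succ_of_ne_zero hm
  refine sum_pos' (fun i _ => mul_nonneg (hf i).le (convPow_nonneg (fun j => (hf j).le) _ _))
    ⟨k, self_mem_range_succ k, ?_⟩
  rw [Nat.sub_self, convPow_apply_zero]
  exact mul_pos (hf k) (pow_pos (hf 0) m)

end ConvPow

section ModPMF

variable {c : ℝ} {q : ℕ → ℝ}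

theorem modPMF_eq_update (c : ℝ) (q : ℕ → ℝ) :
    modPMF c q = Function.update (fun k => Real.exp (-c) * q k) 0
      (1 - Real.exp (-c) * (1 - q 0)) := by
  funext k
  rcases eq_or_ne k 0 with rfl | hk <;> simp [modPMF, *]

theorem hasSum_modPMF (hq : HasSum q 1) : HasSum (modPMF c q) 1 := by
  rw [modPMF_eq_update]
  set E := Real.exp (-c)
  have h := (hq.mul_left E).update 0 (1 - E * (1 - q 0))
  rwa [show 1 - E * (1 - q 0) - E * q 0 + E * 1 = 1 by ring] at h

theorem hasSum_natCast_mul_modPMF {μ : ℝ} (hμ : HasSum (fun k : ℕ => (k : ℝ) * q k) μ) :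
    HasSum (fun k : ℕ => (k : ℝ) * modPMF c q k) (Real.exp (-c) * μ) := by
  have h : (fun k : ℕ => (k : ℝ) * modPMF c q k) =
      fun k : ℕ => Real.exp (-c) * ((k : ℝ) * q k) := by
    funext k
    rcases eq_or_ne k 0 with rfl | hk
    · simp
    · simp only [modPMF, if_neg hk]; ring
  rw [h]
  exact hμ.mul_left _

theorem modPMF_nonneg (hc : 0 ≤ c) (hq0 : ∀ k, 0 ≤ q k) (hq : HasSum q 1) (k : ℕ) :
    0 ≤ modPMF c q k := by
  have hq01 : q 0 ≤ 1 := le_hasSum hq 0 fun j _ => hq0 j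
  have hE : Real.exp (-c) ≤ 1 := Real.exp_le_one_iff.mpr (neg_nonpos.mpr hc)
  unfold modPMF
  split_ifs
  · nlinarith [Real.exp_pos (-c), hq0 0]
  · exact mul_nonneg (Real.exp_pos _).le (hq0 k)

theorem modPMF_zero_pos (hc : 0 < c) (hq0 : ∀ k, 0 ≤ q k) (hq : HasSum q 1) :
    0 < modPMF c q 0 := by
  have hq01 : q 0 ≤ 1 := le_hasSum hq 0 fun j _ => hq0 j
  have hE : Real.exp (-c) < 1 := Real.exp_lt_one_iff.mpr (neg_lt_zero.mpr hc)
  show 0 < 1 - Real.exp (-c) * (1 - q 0)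
  nlinarith [Real.exp_pos (-c), hq0 0]

theorem modPMF_pos (hc : 0 < c) (hq0 : ∀ k, 0 ≤ q k) (hq : HasSum q 1)
    (hqpos : ∀ k, 1 ≤ k → 0 < q k) (k : ℕ) : 0 < modPMF c q k := by
  rcases eq_or_ne k 0 with rfl | hk
  · exact modPMF_zero_pos hc hq0 hq
  · simp only [modPMF, if_neg hk]
    exact mul_pos (Real.exp_pos _) (hqpos k (Nat.one_le_iff_ne_zero.mpr hk))

end ModPMF

section Perron

open Matrix

variable {ι : Type*} [Fintype ι] {A : Matrix ι ι ℝ}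

theorem vecMul_pos (hA : ∀ i j, 0 < A i j) {x : ι → ℝ} (hx0 : 0 ≤ x) (hx : x ≠ 0) (j : ι) :
    0 < (x ᵥ* A) j := by
  obtain ⟨i, hi⟩ := Function.ne_iff.mp hx
  exact sum_pos' (fun k _ => mul_nonneg (hx0 k) (hA k j).le)
    ⟨i, mem_univ i, mul_pos (lt_of_le_of_ne (hx0 i) (Ne.symm hi)) (hA i j)⟩

theorem le_sum_sum_of_smul_le_vecMul (hA : ∀ i j, 0 ≤ A i j) {x : ι → ℝ} {t : ℝ}
    (hx : x ∈ stdSimplex ℝ ι) (ht : t • x ≤ x ᵥ* A) : t ≤ ∑ i, ∑ j, A i j :=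
  calc t = ∑ j, t * x j := by rw [← mul_sum, hx.2, mul_one]
    _ ≤ ∑ j, ∑ i, x i * A i j := sum_le_sum fun j _ => ht j
    _ = ∑ i, x i * ∑ j, A i j := by rw [sum_comm]; simp_rw [mul_sum]
    _ ≤ ∑ i, ∑ j, A i j := sum_le_sum fun i _ =>
        mul_le_of_le_one_left (sum_nonneg fun j _ => hA i j) (mem_Icc_of_mem_stdSimplex hx i).2

/-- `y = x A` satisfies `y A - t y = (x A - t x) A > 0`. -/
theorem exists_lt_smul_le_vecMul (hA : ∀ i j, 0 < A i j) {x : ι → ℝ} {t : ℝ} (hx0 : 0 ≤ x)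
    (ht : t • x ≤ x ᵥ* A) (hne : t • x ≠ x ᵥ* A) :
    ∃ z ∈ stdSimplex ℝ ι, ∃ s > t, s • z ≤ z ᵥ* A := by
  set y := x ᵥ* A
  set v := y - t • x
  have hv0 : 0 ≤ v := sub_nonneg.mpr ht
  have hvA : ∀ k, 0 < (v ᵥ* A) k := vecMul_pos hA hv0 (sub_ne_zero.mpr hne.symm)
  have hx : x ≠ 0 := by
    rintro rfl
    simp [y] at hne
  have hy : ∀ j, 0 < y j := vecMul_pos hA hx0 hx
  have hyA : y ᵥ* A = v ᵥ* A + t • y := by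
    rw [← smul_vecMul, ← add_vecMul, sub_add_cancel]
  obtain ⟨δ, hδ, hδpos⟩ : ∃ δ, (∀ k, δ * y k < (v ᵥ* A) k) ∧ 0 < δ := by
    have h : ∀ᶠ δ in 𝓝[>] (0 : ℝ), ∀ k, δ * y k < (v ᵥ* A) k := by
      refine eventually_all.mpr fun k => ?_
      have hlim : Tendsto (fun δ : ℝ => δ * y k) (𝓝[>] 0) (𝓝 0) := by
        simpa using ((tendsto_id (x := 𝓝 (0 : ℝ))).mul_const (y k)).mono_left nhdsWithin_le_nhds
      exact hlim.eventually (gt_mem_nhds (hvA k))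
    exact (h.and self_mem_nhdsWithin).exists
  have hty : (t + δ) • y ≤ y ᵥ* A := fun k => by
    have := hδ k
    simp only [hyA, Pi.add_apply, Pi.smul_apply, smul_eq_mul]
    linarith
  have hS : 0 < ∑ i, y i := by
    obtain ⟨i, -⟩ := Function.ne_iff.mp hx
    exact sum_pos' (fun i _ => (hy i).le) ⟨i, mem_univ i, hy i⟩
  refine ⟨(∑ i, y i)⁻¹ • y, ⟨fun i => ?_, ?_⟩, t + δ, by linarith, ?_⟩
  · exact mul_nonneg (inv_nonneg.mpr hS.le) (hy i).le
  · simp only [Pi.smul_apply, smul_eq_mul, ← mul_sum]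
    exact inv_mul_cancel₀ hS.ne'
  · rw [smul_vecMul, smul_comm]
    exact smul_le_smul_of_nonneg_left hty (inv_nonneg.mpr hS.le)

/-- Perron's theorem, by maximising `t` subject to `t • x ≤ x A` over the simplex
(Collatz–Wielandt). -/
theorem exists_pos_vecMul_eq_smul [Nonempty ι] (hA : ∀ i j, 0 < A i j) :
    ∃ (lam : ℝ) (x : ι → ℝ), (∀ i, 0 < x i) ∧ ∑ i, x i = 1 ∧ x ᵥ* A = lam • x := by
  classical
  set T := ∑ i, ∑ j, A i j
  set C : Set ((ι → ℝ) × ℝ) := Prod.fst ⁻¹' stdSimplex ℝ ι ∩ Prod.snd ⁻¹' Set.Icc 0 T ∩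
    {p | p.2 • p.1 ≤ p.1 ᵥ* A}
  have hC : IsCompact C := by
    refine ((isCompact_stdSimplex ℝ ι).prod isCompact_Icc).of_isClosed_subset ?_
      fun p hp => hp.1
    exact (((isClosed_stdSimplex ℝ ι).preimage continuous_fst).inter
      (isClosed_Icc.preimage continuous_snd)).inter
      (isClosed_le (continuous_snd.smul continuous_fst)
        (continuous_fst.matrix_vecMul continuous_const))
  obtain ⟨i₀⟩ := ‹Nonempty ι›
  have hA0 : ∀ i j, 0 ≤ A i j := fun i j => (hA i j).le
  have hC₀ : (Pi.single i₀ 1, 0) ∈ C := by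
    refine ⟨⟨single_mem_stdSimplex ℝ i₀, le_rfl, sum_nonneg fun i _ => sum_nonneg fun j _ => ?_⟩,
      fun j => ?_⟩
    · exact hA0 i j
    · simpa using hA0 i₀ j
  obtain ⟨⟨x, t⟩, ⟨⟨hx, ht0, -⟩, hxt⟩, hmax⟩ :=
    hC.exists_isMaxOn ⟨_, hC₀⟩ continuous_snd.continuousOn
  replace hx : x ∈ stdSimplex ℝ ι := hx
  replace ht0 : 0 ≤ t := ht0
  have heq : x ᵥ* A = t • x := by
    by_contra hne
    obtain ⟨z, hz, s, hts, hs⟩ := exists_lt_smul_le_vecMul hA hx.1 hxt (Ne.symm hne)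
    replace hts : t < s := hts
    have hzs : (z, s) ∈ C := ⟨⟨hz, by linarith, le_sum_sum_of_smul_le_vecMul hA0 hz hs⟩, hs⟩
    exact (hmax hzs).not_gt hts
  have hx0 : x ≠ 0 := by
    rintro rfl
    simpa using hx.2
  refine ⟨t, x, fun i => pos_of_mul_pos_right ?_ ht0, hx.2, heq⟩
  simpa [heq] using vecMul_pos hA hx.1 hx0 i

end Perron

section TruncatedQSD

variable {α : Type*} {P : α → α → ℝ} {B : Finset α} {π : α → ℝ} {lam : ℝ}

/-- A quasi-stationary distribution of the chain killed on leaving the finite set `B`. -/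
structure IsTruncatedQSD (P : α → α → ℝ) (B : Finset α) (π : α → ℝ) (lam : ℝ) : Prop where
  pos : ∀ x ∈ B, 0 < π x
  eq_zero : ∀ x ∉ B, π x = 0
  sum_eq_one : ∑ x ∈ B, π x = 1
  sum_mul_eq : ∀ y ∈ B, ∑ x ∈ B, π x * P x y = lam * π y

theorem exists_isTruncatedQSD (hB : B.Nonempty) (hP : ∀ x ∈ B, ∀ y ∈ B, 0 < P x y) :
    ∃ π lam, IsTruncatedQSD P B π lam := by
  classical
  have : Nonempty B := hB.to_subtype
  obtain ⟨lam, v, hv, hv1, hvA⟩ :=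
    exists_pos_vecMul_eq_smul (A := Matrix.of fun i j : B => P i j) fun i j => hP _ i.2 _ j.2
  set π : α → ℝ := fun x => if h : x ∈ B then v ⟨x, h⟩ else 0
  have hsum : ∀ g : α → ℝ, ∑ x ∈ B, π x * g x = ∑ i : B, v i * g i := fun g => by
    rw [← sum_coe_sort B]
    exact sum_congr rfl fun i _ => by simp [π]
  refine ⟨π, lam, fun x hx => by simp [π, hx, hv], fun x hx => by simp [π, hx], ?_, fun y hy => ?_⟩
  · simpa using (hsum 1).trans (by simpa using hv1)
  · have hy' := congrFun hvA ⟨y, hy⟩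
    simp only [Matrix.vecMul, dotProduct, Matrix.of_apply, Pi.smul_apply, smul_eq_mul] at hy'
    rw [hsum, hy']
    simp [π, hy]

namespace IsTruncatedQSD

theorem nonneg (h : IsTruncatedQSD P B π lam) (x : α) : 0 ≤ π x := by
  by_cases hx : x ∈ B
  · exact (h.pos x hx).le
  · exact (h.eq_zero x hx).ge

theorem hasSum_mul (h : IsTruncatedQSD P B π lam) (g : α → ℝ) :
    HasSum (fun x => π x * g x) (∑ x ∈ B, π x * g x) :=
  hasSum_sum_of_ne_finset_zero fun x hx => by rw [h.eq_zero x hx, zero_mul]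

theorem hasSum (h : IsTruncatedQSD P B π lam) : HasSum π 1 := by
  simpa [h.sum_eq_one] using h.hasSum_mul 1

theorem le_one (h : IsTruncatedQSD P B π lam) (x : α) : π x ≤ 1 :=
  le_hasSum h.hasSum x fun y _ => h.nonneg y

theorem mul_sum_eq (h : IsTruncatedQSD P B π lam) (w : α → ℝ) :
    lam * ∑ y ∈ B, π y * w y = ∑ x ∈ B, π x * ∑ y ∈ B, P x y * w y := by
  simp_rw [mul_sum]
  rw [sum_comm]
  refine sum_congr rfl fun y hy => ?_
  rw [← mul_assoc, ← h.sum_mul_eq y hy, sum_mul]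
  exact sum_congr rfl fun x _ => by ring

theorem mul_sum_le (h : IsTruncatedQSD P B π lam) {w C : α → ℝ}
    (hC : ∀ x ∈ B, ∑ y ∈ B, P x y * w y ≤ C x) :
    lam * ∑ y ∈ B, π y * w y ≤ ∑ x ∈ B, π x * C x := by
  rw [h.mul_sum_eq]
  exact sum_le_sum fun x hx => mul_le_mul_of_nonneg_left (hC x hx) (h.nonneg x)

theorem le_eigenvalue (h : IsTruncatedQSD P B π lam) (hP : ∀ x ∈ B, ∀ y ∈ B, 0 ≤ P x y)
    {x : α} (hx : x ∈ B) : P x x ≤ lam := by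
  have hle : π x * P x x ≤ π x * lam := by
    rw [mul_comm _ lam, ← h.sum_mul_eq x hx]
    exact single_le_sum (f := fun y => π y * P y x)
      (fun y hy => mul_nonneg (h.nonneg y) (hP y hy x hx)) hx
  exact le_of_mul_le_mul_left hle (h.pos x hx)

theorem sum_mul_le_div (h : IsTruncatedQSD P B π lam) {w : α → ℝ} {C c : ℝ}
    (hw : ∀ x, 0 ≤ w x) (hC : ∀ x ∈ B, ∑ y ∈ B, P x y * w y ≤ C) (hc : 0 < c) (hlam : c ≤ lam)
    (E : Finset α) : ∑ x ∈ E, π x * w x ≤ C / c := by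
  have hBC := h.mul_sum_le (C := fun _ => C) hC
  rw [← sum_mul, h.sum_eq_one, one_mul] at hBC
  have hπw : ∀ x, 0 ≤ π x * w x := fun x => mul_nonneg (h.nonneg x) (hw x)
  calc ∑ x ∈ E, π x * w x ≤ ∑ x ∈ B, π x * w x :=
        sum_le_hasSum E (fun x _ => hπw x) (h.hasSum_mul w)
    _ ≤ C / c := by
        rw [le_div_iff₀ hc]
        nlinarith [sum_nonneg fun x (_ : x ∈ B) => hπw x]

end IsTruncatedQSD

end TruncatedQSD

section Tightness

variable {ι κ α : Type*}

def IsUniformlyTight (π : ι → α → ℝ) : Prop :=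
  ∀ ε > 0, ∃ F : Finset α, ∀ i (E : Finset α), Disjoint E F → ∑ x ∈ E, π i x ≤ ε

theorem IsUniformlyTight.comp {π : ι → α → ℝ} (h : IsUniformlyTight π) (f : κ → ι) :
    IsUniformlyTight (π ∘ f) :=
  fun ε hε => (h ε hε).imp fun _ hF i => hF (f i)

theorem HasSum.abs_sub_sum_le {f : α → ℝ} {a ε : ℝ} {F : Finset α} (hf : HasSum f a)
    (hε : ∀ E : Finset α, Disjoint E F → |∑ x ∈ E, f x| ≤ ε) : |a - ∑ x ∈ F, f x| ≤ ε := by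
  classical
  have hlim : Tendsto (fun E : Finset α => |∑ x ∈ E, f x - ∑ x ∈ F, f x|) atTop
      (𝓝 |a - ∑ x ∈ F, f x|) :=
    (Tendsto.sub_const hf _).abs
  refine le_of_tendsto hlim ?_
  filter_upwards [eventually_ge_atTop F] with E hE
  rw [← sum_sdiff hE, add_sub_cancel_right]
  exact hε _ sdiff_disjoint

theorem hasSum_of_tendsto_of_isUniformlyTight {l : Filter ι} [l.NeBot] {π : ι → α → ℝ}
    {μ g : α → ℝ} {c : ι → ℝ} {c₀ : ℝ} (hπ : ∀ i x, 0 ≤ π i x) (hg : ∀ x, |g x| ≤ 1)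
    (htight : IsUniformlyTight π) (hlim : ∀ x, Tendsto (fun i => π i x) l (𝓝 (μ x)))
    (hsum : ∀ᶠ i in l, HasSum (fun x => π i x * g x) (c i)) (hc : Tendsto c l (𝓝 c₀)) :
    HasSum (fun x => μ x * g x) c₀ := by
  classical
  have habs : ∀ {f : α → ℝ} (E : Finset α), (∀ x, 0 ≤ f x) →
      |∑ x ∈ E, f x * g x| ≤ ∑ x ∈ E, f x := fun E hf =>
    (abs_sum_le_sum_abs _ _).trans <| sum_le_sum fun x _ => by
      rw [abs_mul, abs_of_nonneg (hf x)]
      exact mul_le_of_le_one_right (hf x) (hg x)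
  have hμ : ∀ x, 0 ≤ μ x := fun x => ge_of_tendsto' (hlim x) fun i => hπ i x
  refine Metric.tendsto_atTop.mpr fun ε hε => ?_
  obtain ⟨F, hF⟩ := htight (ε / 3) (by positivity)
  have htail : ∀ E : Finset α, Disjoint E F → ∑ x ∈ E, μ x ≤ ε / 3 := fun E hE =>
    le_of_tendsto (tendsto_finsetSum E fun x _ => hlim x) (Eventually.of_forall fun i => hF i E hE)
  have hhead : |c₀ - ∑ x ∈ F, μ x * g x| ≤ ε / 3 := by
    refine le_of_tendsto ((hc.sub (tendsto_finsetSum F fun x _ => (hlim x).mul_const _)).abs) ?_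
    filter_upwards [hsum] with i hi
    exact hi.abs_sub_sum_le fun E hE => (habs E (hπ i)).trans (hF i E hE)
  refine ⟨F, fun E hE => ?_⟩
  rw [Real.dist_eq, ← sum_sdiff hE]
  calc |∑ x ∈ E \ F, μ x * g x + ∑ x ∈ F, μ x * g x - c₀|
      ≤ |∑ x ∈ E \ F, μ x * g x| + |c₀ - ∑ x ∈ F, μ x * g x| := by
        rw [← abs_neg (c₀ - _), neg_sub, add_sub_assoc]
        exact abs_add_le _ _
    _ ≤ ε / 3 + ε / 3 := add_le_add ((habs _ hμ).trans (htail _ sdiff_disjoint)) hhead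
    _ < ε := by linarith

end Tightness

section Limit

variable {ι α : Type*}

/-- Half of the mass sits on a finite set, where the killing rate `d` is bounded below. -/
theorem exists_eigenvalue_le_lt_one {P : α → α → ℝ} {B : ι → Finset α} {π : ι → α → ℝ}
    {lam : ι → ℝ} {d : α → ℝ} (hπ : ∀ i, IsTruncatedQSD P (B i) (π i) (lam i))
    (htight : IsUniformlyTight π) (hd : ∀ x, 0 < d x)
    (hkill : ∀ i, ∀ x ∈ B i, ∑ y ∈ B i, P x y ≤ 1 - d x) :
    ∃ lam₁ < 1, ∀ i, lam i ≤ lam₁ := by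
  classical
  obtain ⟨F, hF⟩ := htight (1 / 2) one_half_pos
  obtain ⟨d₀, hd₀F, hd₀⟩ : ∃ d₀, (∀ x ∈ F, d₀ ≤ d x) ∧ 0 < d₀ :=
    ((F.eventually_all.mpr fun x _ =>
      (tendsto_nhdsWithin_of_tendsto_nhds tendsto_id).eventually (eventually_le_nhds (hd x))).and
      self_mem_nhdsWithin).exists (f := 𝓝[>] (0 : ℝ))
  refine ⟨1 - d₀ / 2, by linarith, fun i => ?_⟩
  have hupper : lam i ≤ 1 - ∑ x ∈ B i, π i x * d x := by
    have h := (hπ i).mul_sum_le (w := 1) (C := fun x => 1 - d x) (by simpa using hkill i)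
    simp only [Pi.one_apply, mul_one, (hπ i).sum_eq_one, mul_sub, sum_sub_distrib] at h
    exact h
  have hmass : 1 / 2 ≤ ∑ x ∈ B i ∩ F, π i x := by
    have h := hF i (B i \ F) sdiff_disjoint
    linarith [sum_inter_add_sum_sdiff (B i) F (π i), (hπ i).sum_eq_one]
  have hlower : d₀ / 2 ≤ ∑ x ∈ B i, π i x * d x :=
    calc d₀ / 2 ≤ ∑ x ∈ B i ∩ F, π i x * d₀ := by rw [← sum_mul]; nlinarith
      _ ≤ ∑ x ∈ B i ∩ F, π i x * d x := sum_le_sum fun x hx =>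
          mul_le_mul_of_nonneg_left (hd₀F x (mem_inter.mp hx).2) ((hπ i).nonneg x)
      _ ≤ ∑ x ∈ B i, π i x * d x := sum_le_sum_of_subset_of_nonneg inter_subset_left
          fun x _ _ => mul_nonneg ((hπ i).nonneg x) (hd x).le
  linarith

theorem exists_subseq_tendsto [Countable α] {π : ℕ → α → ℝ} {lam : ℕ → ℝ} {a b : ℝ}
    (hπ : ∀ n x, π n x ∈ Set.Icc 0 1) (hlam : ∀ n, lam n ∈ Set.Icc a b) :
    ∃ (μ : α → ℝ) (l : ℝ) (φ : ℕ → ℕ), StrictMono φ ∧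
      (∀ x, Tendsto (fun k => π (φ k) x) atTop (𝓝 (μ x))) ∧
      Tendsto (lam ∘ φ) atTop (𝓝 l) ∧ l ∈ Set.Icc a b := by
  obtain ⟨⟨μ, l⟩, ⟨-, hl⟩, φ, hφ, hlim⟩ :=
    ((isCompact_univ_pi fun _ => isCompact_Icc).prod isCompact_Icc).tendsto_subseq
      (x := fun n => (π n, lam n)) fun n => ⟨fun x _ => hπ n x, hlam n⟩
  exact ⟨μ, l, φ, hφ, fun x => tendsto_pi_nhds.mp ((continuous_fst.tendsto _).comp hlim) x,
    (continuous_snd.tendsto _).comp hlim, hl⟩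

end Limit

section Quadrant

def quadrantBox (N : ℕ) : Finset (ℕ × ℕ) := Icc 1 N ×ˢ Icc 1 N

theorem mem_quadrantBox {N : ℕ} {p : ℕ × ℕ} :
    p ∈ quadrantBox N ↔ (1 ≤ p.1 ∧ p.1 ≤ N) ∧ 1 ≤ p.2 ∧ p.2 ≤ N := by
  simp [quadrantBox]

/-- Markov's inequality: off `quadrantBox R`, a weight supported on the positive quadrant has
`p.1 + p.2 ≥ R + 1`. -/
theorem isUniformlyTight_of_sum_mul_le {ι : Type*} {π : ι → ℕ × ℕ → ℝ} {M : ℝ}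
    (hπ : ∀ i p, 0 ≤ π i p) (hsupp : ∀ i (p : ℕ × ℕ), p.1 = 0 ∨ p.2 = 0 → π i p = 0)
    (hM : ∀ i (E : Finset (ℕ × ℕ)), ∑ p ∈ E, π i p * ((p.1 : ℝ) + p.2) ≤ M) :
    IsUniformlyTight π := by
  intro ε hε
  obtain ⟨R, hR⟩ := exists_nat_gt (M / ε)
  refine ⟨quadrantBox R, fun i E hE => ?_⟩
  have hterm : ∀ p ∈ E, π i p * ((R : ℝ) + 1) ≤ π i p * ((p.1 : ℝ) + p.2) := by
    intro p hp
    by_cases h0 : p.1 = 0 ∨ p.2 = 0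
    · simp [hsupp i p h0]
    · have hR' : R + 1 ≤ p.1 + p.2 := by
        have := disjoint_left.mp hE hp
        rw [mem_quadrantBox] at this
        omega
      exact mul_le_mul_of_nonneg_left (by exact_mod_cast hR') (hπ i p)
  have hsum := (sum_le_sum hterm).trans (hM i E)
  rw [← sum_mul] at hsum
  rw [div_lt_iff₀ hε] at hR
  nlinarith

theorem isQSD_of_tendsto {P : ℕ × ℕ → ℕ × ℕ → ℝ} {N : ℕ → ℕ} {π : ℕ → ℕ × ℕ → ℝ}
    {lam : ℕ → ℝ} {μ : ℕ × ℕ → ℝ} {l : ℝ} (hP : ∀ s p, |P s p| ≤ 1)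
    (hπ : ∀ k, IsTruncatedQSD P (quadrantBox (N k)) (π k) (lam k)) (hN : Tendsto N atTop atTop)
    (htight : IsUniformlyTight π) (hμ : ∀ p, Tendsto (fun k => π k p) atTop (𝓝 (μ p)))
    (hl : Tendsto lam atTop (𝓝 l)) : IsQSD P μ l := by
  have hπ0 : ∀ k p, 0 ≤ π k p := fun k => (hπ k).nonneg
  refine ⟨fun p => ge_of_tendsto' (hμ p) fun k => hπ0 k p, fun p hp => ?_, ?_, fun p hp1 hp2 => ?_⟩
  · have h0 : ∀ k, π k p = 0 := fun k => (hπ k).eq_zero p (by rw [mem_quadrantBox]; omega)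
    exact tendsto_nhds_unique (hμ p) (by simp [h0])
  · simpa using hasSum_of_tendsto_of_isUniformlyTight (g := 1) (c := fun _ => 1) (c₀ := 1) hπ0
      (by simp) htight hμ (Eventually.of_forall fun k => by simpa using (hπ k).hasSum)
      tendsto_const_nhds
  · refine hasSum_of_tendsto_of_isUniformlyTight hπ0 (fun s => hP s p) htight hμ ?_ (hl.mul (hμ p))
    filter_upwards [hN.eventually_ge_atTop (max p.1 p.2)] with k hk
    have hp : p ∈ quadrantBox (N k) :=
      mem_quadrantBox.mpr ⟨⟨hp1, le_of_max_le_left hk⟩, hp2, le_of_max_le_right hk⟩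
    simpa [(hπ k).sum_mul_eq p hp] using (hπ k).hasSum_mul fun s => P s p

end Quadrant

theorem exists_isQSD_of_moment_bound {P : ℕ × ℕ → ℕ × ℕ → ℝ} {C : ℝ} {d : ℕ × ℕ → ℝ}
    (hP0 : ∀ s p, 0 ≤ P s p) (hP1 : ∀ s p, P s p ≤ 1)
    (hpos : ∀ s p : ℕ × ℕ, 1 ≤ s.1 → 1 ≤ s.2 → 1 ≤ p.1 → 1 ≤ p.2 → 0 < P s p)
    (hmom : ∀ s : ℕ × ℕ, 1 ≤ s.1 → 1 ≤ s.2 →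
      ∀ E : Finset (ℕ × ℕ), ∑ p ∈ E, P s p * ((p.1 : ℝ) + p.2) ≤ C)
    (hd : ∀ s, 0 < d s)
    (hkill : ∀ s : ℕ × ℕ, 1 ≤ s.1 → 1 ≤ s.2 → ∀ E : Finset (ℕ × ℕ),
      (∀ p ∈ E, 1 ≤ p.1 ∧ 1 ≤ p.2) → ∑ p ∈ E, P s p ≤ 1 - d s) :
    ∃ lam, 0 < lam ∧ lam < 1 ∧ ∃ π, IsQSD P π lam := by
  have hbox : ∀ {N} {s : ℕ × ℕ}, s ∈ quadrantBox N → 1 ≤ s.1 ∧ 1 ≤ s.2 := fun hs =>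
    ⟨(mem_quadrantBox.mp hs).1.1, (mem_quadrantBox.mp hs).2.1⟩
  have h11 : ∀ N, ((1, 1) : ℕ × ℕ) ∈ quadrantBox (N + 1) := fun N => by simp [mem_quadrantBox]
  choose π lam hπ using fun N => exists_isTruncatedQSD (P := P) ⟨_, h11 N⟩
    fun s hs p hp => hpos s p (hbox hs).1 (hbox hs).2 (hbox hp).1 (hbox hp).2
  have hc₀ : 0 < P (1, 1) (1, 1) := hpos _ _ le_rfl le_rfl le_rfl le_rfl
  have hlam₀ : ∀ N, P (1, 1) (1, 1) ≤ lam N := fun N =>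
    (hπ N).le_eigenvalue (fun s _ p _ => hP0 s p) (h11 N)
  have hmomN : ∀ N (E : Finset (ℕ × ℕ)),
      ∑ p ∈ E, π N p * ((p.1 : ℝ) + p.2) ≤ C / P (1, 1) (1, 1) := fun N =>
    (hπ N).sum_mul_le_div (fun _ => by positivity)
      (fun s hs => hmom s (hbox hs).1 (hbox hs).2 _) hc₀ (hlam₀ N)
  have htight : IsUniformlyTight π := isUniformlyTight_of_sum_mul_le (fun N => (hπ N).nonneg)
    (fun N p hp => (hπ N).eq_zero p fun h => by have := hbox h; omega) hmomN
  obtain ⟨lam₁, hlam₁, hlam_le⟩ := exists_eigenvalue_le_lt_one hπ htight hd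
    fun N s hs => hkill s (hbox hs).1 (hbox hs).2 _ fun p hp => hbox hp
  obtain ⟨μ, l, φ, hφ, hμ, hl, hlI⟩ := exists_subseq_tendsto (π := π) (lam := lam)
    (fun N p => ⟨(hπ N).nonneg p, (hπ N).le_one p⟩) fun N => ⟨hlam₀ N, hlam_le N⟩
  have hP : ∀ s p, |P s p| ≤ 1 := fun s p => abs_le.mpr ⟨by linarith [hP0 s p], hP1 s p⟩
  exact ⟨l, hc₀.trans_le hlI.1, hlI.2.trans_lt hlam₁, μ, isQSD_of_tendsto (N := (· + 1) ∘ φ) hP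
    (fun k => hπ (φ k)) ((tendsto_add_atTop_nat 1).comp hφ.tendsto_atTop) (htight.comp φ) hμ hl⟩

theorem sum_mul_le_mul_of_hasSum {α β : Type*} {f : α → ℝ} {g : β → ℝ} {a b : ℝ}
    (hf0 : ∀ x, 0 ≤ f x) (hg0 : ∀ y, 0 ≤ g y) (hf : HasSum f a) (hg : HasSum g b)
    (E : Finset (α × β)) : ∑ p ∈ E, f p.1 * g p.2 ≤ a * b :=
  sum_le_hasSum E (fun _ _ => mul_nonneg (hf0 _) (hg0 _))
    (hf.mul hg (hf.summable.mul_of_nonneg hg.summable hf0 hg0))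

theorem mul_exp_neg_le_inv {K x c : ℝ} (hK : 0 < K) (hx : 0 ≤ x) (hc : K * x ≤ c) :
    x * Real.exp (-c) ≤ K⁻¹ := by
  have hKx : K * x * Real.exp (-(K * x)) ≤ 1 := by
    rw [Real.exp_neg, ← div_eq_mul_inv, div_le_one (Real.exp_pos _)]
    linarith [Real.add_one_le_exp (K * x)]
  calc x * Real.exp (-c) ≤ x * Real.exp (-(K * x)) :=
        mul_le_mul_of_nonneg_left (Real.exp_le_exp.mpr (by linarith)) hx
    _ = K⁻¹ * (K * x * Real.exp (-(K * x))) := by field_simp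
    _ ≤ K⁻¹ := mul_le_of_le_one_right (inv_nonneg.mpr hK.le) hKx

section Ricker

variable {a b K K' : ℝ} {q q' : ℕ → ℝ}

theorem rickerKernel_nonneg (ha : 0 ≤ a) (hb : 0 ≤ b) (hK : 0 ≤ K) (hK' : 0 ≤ K')
    (hq0 : ∀ k, 0 ≤ q k) (hq : HasSum q 1) (hq0' : ∀ k, 0 ≤ q' k) (hq' : HasSum q' 1)
    (s p : ℕ × ℕ) : 0 ≤ rickerKernel a b K K' q q' s p :=
  mul_nonneg (convPow_nonneg (modPMF_nonneg (by positivity) hq0 hq) _ _)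
    (convPow_nonneg (modPMF_nonneg (by positivity) hq0' hq') _ _)

theorem rickerKernel_le_one (ha : 0 ≤ a) (hb : 0 ≤ b) (hK : 0 ≤ K) (hK' : 0 ≤ K')
    (hq0 : ∀ k, 0 ≤ q k) (hq : HasSum q 1) (hq0' : ∀ k, 0 ≤ q' k) (hq' : HasSum q' 1)
    (s p : ℕ × ℕ) : rickerKernel a b K K' q q' s p ≤ 1 :=
  mul_le_one₀ (convPow_le_one (modPMF_nonneg (by positivity) hq0 hq) (hasSum_modPMF hq) _ _)
    (convPow_nonneg (modPMF_nonneg (by positivity) hq0' hq') _ _)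
    (convPow_le_one (modPMF_nonneg (by positivity) hq0' hq') (hasSum_modPMF hq') _ _)

theorem rickerKernel_pos (ha : 0 ≤ a) (hb : 0 ≤ b) (hK : 0 < K) (hK' : 0 < K')
    (hq0 : ∀ k, 0 ≤ q k) (hq : HasSum q 1) (hqpos : ∀ k, 1 ≤ k → 0 < q k)
    (hq0' : ∀ k, 0 ≤ q' k) (hq' : HasSum q' 1) (hqpos' : ∀ k, 1 ≤ k → 0 < q' k)
    {s : ℕ × ℕ} (hs1 : 1 ≤ s.1) (hs2 : 1 ≤ s.2) (p : ℕ × ℕ) :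
    0 < rickerKernel a b K K' q q' s p := by
  have h1 : (0 : ℝ) < s.1 := by exact_mod_cast hs1
  have h2 : (0 : ℝ) < s.2 := by exact_mod_cast hs2
  exact mul_pos (convPow_pos (modPMF_pos (by positivity) hq0 hq hqpos) (by omega) _)
    (convPow_pos (modPMF_pos (by positivity) hq0' hq' hqpos') (by omega) _)

/-- From `m` parents the expected offspring is `m e^{-c} μ` with `c ≥ K m`, and
`m e^{-K m} ≤ 1 / K`. -/
theorem sum_rickerKernel_mul_le (ha : 0 ≤ a) (hb : 0 ≤ b) (hK : 0 < K) (hK' : 0 < K')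
    {μ μ' : ℝ} (hq0 : ∀ k, 0 ≤ q k) (hq : HasSum q 1)
    (hμ : HasSum (fun k : ℕ => (k : ℝ) * q k) μ) (hq0' : ∀ k, 0 ≤ q' k) (hq' : HasSum q' 1)
    (hμ' : HasSum (fun k : ℕ => (k : ℝ) * q' k) μ') (s : ℕ × ℕ) (E : Finset (ℕ × ℕ)) :
    ∑ p ∈ E, rickerKernel a b K K' q q' s p * ((p.1 : ℝ) + p.2) ≤ μ / K + μ' / K' := by
  set c := K * ((s.1 : ℝ) + b * s.2)
  set c' := K' * (a * (s.1 : ℝ) + s.2)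
  set F := convPow (modPMF c q) s.1
  set G := convPow (modPMF c' q') s.2
  have hF0 : ∀ k, 0 ≤ F k := convPow_nonneg (modPMF_nonneg (by positivity) hq0 hq) _
  have hG0 : ∀ k, 0 ≤ G k := convPow_nonneg (modPMF_nonneg (by positivity) hq0' hq') _
  have hμ0 : 0 ≤ μ := hμ.nonneg fun k => mul_nonneg k.cast_nonneg (hq0 k)
  have hμ0' : 0 ≤ μ' := hμ'.nonneg fun k => mul_nonneg k.cast_nonneg (hq0' k)
  have hmF : (s.1 : ℝ) * (Real.exp (-c) * μ) ≤ μ / K := by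
    rw [← mul_assoc, div_eq_inv_mul]
    exact mul_le_mul_of_nonneg_right (mul_exp_neg_le_inv hK s.1.cast_nonneg
      (by simp only [c]; nlinarith [mul_nonneg hb (s.2.cast_nonneg : (0 : ℝ) ≤ s.2)])) hμ0
  have hmG : (s.2 : ℝ) * (Real.exp (-c') * μ') ≤ μ' / K' := by
    rw [← mul_assoc, div_eq_inv_mul]
    exact mul_le_mul_of_nonneg_right (mul_exp_neg_le_inv hK' s.2.cast_nonneg
      (by simp only [c']; nlinarith [mul_nonneg ha (s.1.cast_nonneg : (0 : ℝ) ≤ s.1)])) hμ0'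
  have h1 := sum_mul_le_mul_of_hasSum (fun k => mul_nonneg k.cast_nonneg (hF0 k)) hG0
    (hasSum_natCast_mul_convPow (hasSum_modPMF hq) (hasSum_natCast_mul_modPMF hμ) s.1)
    (hasSum_convPow (hasSum_modPMF hq') s.2) E
  have h2 := sum_mul_le_mul_of_hasSum hF0 (fun k => mul_nonneg k.cast_nonneg (hG0 k))
    (hasSum_convPow (hasSum_modPMF hq) s.1)
    (hasSum_natCast_mul_convPow (hasSum_modPMF hq') (hasSum_natCast_mul_modPMF hμ') s.2) E
  calc ∑ p ∈ E, rickerKernel a b K K' q q' s p * ((p.1 : ℝ) + p.2)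
      = ∑ p ∈ E, (p.1 * F p.1) * G p.2 + ∑ p ∈ E, F p.1 * (p.2 * G p.2) := by
        rw [← sum_add_distrib]
        exact sum_congr rfl fun p _ => by simp only [rickerKernel, F, G, c, c']; ring
    _ ≤ μ / K + μ' / K' := by linarith

/-- `convPow (modPMF …) s.1 0` is the probability that the first species dies out in one step. -/
theorem sum_rickerKernel_le (ha : 0 ≤ a) (hb : 0 ≤ b) (hK : 0 ≤ K) (hK' : 0 ≤ K')
    (hq0 : ∀ k, 0 ≤ q k) (hq : HasSum q 1) (hq0' : ∀ k, 0 ≤ q' k) (hq' : HasSum q' 1)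
    (s : ℕ × ℕ) (E : Finset (ℕ × ℕ)) (hE : ∀ p ∈ E, 1 ≤ p.1) :
    ∑ p ∈ E, rickerKernel a b K K' q q' s p ≤
      1 - convPow (modPMF (K * ((s.1 : ℝ) + b * s.2)) q) s.1 0 := by
  set F := convPow (modPMF (K * ((s.1 : ℝ) + b * s.2)) q) s.1
  set G := convPow (modPMF (K' * (a * (s.1 : ℝ) + s.2)) q') s.2
  have hF0 : ∀ k, 0 ≤ F k := convPow_nonneg (modPMF_nonneg (by positivity) hq0 hq) _
  have hG0 : ∀ k, 0 ≤ G k := convPow_nonneg (modPMF_nonneg (by positivity) hq0' hq') _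
  have hF : HasSum (Function.update F 0 0) (1 - F 0) := by
    have h := (hasSum_convPow (hasSum_modPMF hq) s.1 : HasSum F 1).update 0 0
    rwa [zero_sub, neg_add_eq_sub] at h
  have hF0' : ∀ k, 0 ≤ Function.update F 0 0 k := fun k => by
    rcases eq_or_ne k 0 with rfl | hk
    · simp
    · simpa [Function.update_of_ne hk] using hF0 k
  have h := sum_mul_le_mul_of_hasSum hF0' hG0 hF (hasSum_convPow (hasSum_modPMF hq') s.2) E
  rw [mul_one] at h
  refine le_of_eq_of_le (sum_congr rfl fun p hp => ?_) h
  rw [Function.update_of_ne (by have := hE p hp; omega)]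
  rfl

theorem convPow_modPMF_apply_zero_pos (hb : 0 ≤ b) (hK : 0 < K) (hq0 : ∀ k, 0 ≤ q k)
    (hq : HasSum q 1) (s : ℕ × ℕ) : 0 < convPow (modPMF (K * ((s.1 : ℝ) + b * s.2)) q) s.1 0 := by
  rw [convPow_apply_zero]
  rcases Nat.eq_zero_or_pos s.1 with hs | hs
  · simp [hs]
  · have : (0 : ℝ) < s.1 := by exact_mod_cast hs
    exact pow_pos (modPMF_zero_pos (by positivity) hq0 hq) _

end Ricker

theorem ricker_chain_qsd_exists_general
    (r r' a b K K' : ℝ) (ha : 0 < a) (hb : 0 < b) (hK : 0 < K) (hK' : 0 < K')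
    (q q' : ℕ → ℝ)
    (hq : ∀ k, 0 ≤ q k) (hq1 : HasSum q 1)
    (hqmean : HasSum (fun k : ℕ => (k : ℝ) * q k) (Real.exp r))
    (hqpos : ∀ k : ℕ, 1 ≤ k → 0 < q k)
    (hq' : ∀ k, 0 ≤ q' k) (hq1' : HasSum q' 1)
    (hqmean' : HasSum (fun k : ℕ => (k : ℝ) * q' k) (Real.exp r'))
    (hqpos' : ∀ k : ℕ, 1 ≤ k → 0 < q' k) :
    ∃ lam : ℝ, 0 < lam ∧ lam < 1 ∧
      ∃ π : ℕ × ℕ → ℝ, IsQSD (rickerKernel a b K K' q q') π lam :=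
  exists_isQSD_of_moment_bound
    (rickerKernel_nonneg ha.le hb.le hK.le hK'.le hq hq1 hq' hq1')
    (rickerKernel_le_one ha.le hb.le hK.le hK'.le hq hq1 hq' hq1')
    (fun _ _ hs1 hs2 _ _ =>
      rickerKernel_pos ha.le hb.le hK hK' hq hq1 hqpos hq' hq1' hqpos' hs1 hs2 _)
    (fun s _ _ => sum_rickerKernel_mul_le ha.le hb.le hK hK' hq hq1 hqmean hq' hq1' hqmean' s)
    (convPow_modPMF_apply_zero_pos hb.le hK hq hq1)
    (fun s _ _ E hE =>
      sum_rickerKernel_le ha.le hb.le hK.le hK'.le hq hq1 hq' hq1' s E fun p hp => (hE p hp).1)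

/-- The stochastic Ricker competition chain admits a quasi-stationary distribution:
there is λ ∈ (0,1) and a probability measure π on the all-positive states with
Σ_{(i,j)} π(i,j)·Q((i,j),(m,n)) = λ·π(m,n) for all m, n ≥ 1. -/
theorem ricker_chain_qsd_exists
    (r r' a b K K' : ℝ) (ha : 0 < a) (hb : 0 < b) (hK : 0 < K) (hK' : 0 < K')
    (q q' : ℕ → ℝ)
    (hq : ∀ k, 0 ≤ q k) (hq1 : HasSum q 1)
    (hqmean : HasSum (fun k : ℕ => (k : ℝ) * q k) (Real.exp r))
    (hqvar : ∃ v : ℝ, HasSum (fun k : ℕ => (k : ℝ) ^ 2 * q k) v)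
    (hqpos : ∀ k : ℕ, 1 ≤ k → 0 < q k)
    (hq' : ∀ k, 0 ≤ q' k) (hq1' : HasSum q' 1)
    (hqmean' : HasSum (fun k : ℕ => (k : ℝ) * q' k) (Real.exp r'))
    (hqvar' : ∃ v : ℝ, HasSum (fun k : ℕ => (k : ℝ) ^ 2 * q' k) v)
    (hqpos' : ∀ k : ℕ, 1 ≤ k → 0 < q' k) :
    ∃ lam : ℝ, 0 < lam ∧ lam < 1 ∧
      ∃ π : ℕ × ℕ → ℝ, IsQSD (rickerKernel a b K K' q q') π lam :=
  ricker_chain_qsd_exists_general r r' a b K K' ha hb hK hK' q q' hq hq1 hqmean hqpos hq' hq1'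
    hqmean' hqpos'
end
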